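/- Let Z be a gauge field on T such that (QZ)(y, y+Le_μ) = 0 for every coarse bond, (τZ)(y,x) = 0 for every y ∈ T' and every x ∈ B(y), and dZ(p) = 0 for every plaquette p of T. Then Z(b) = 0 for every bond b of T. -/

import Mathlib

open Finset

noncomputable section

/-- Points of the discrete torus `(ℤ/Nℤ)³`. -/
abbrev TPt (N : ℕ) : Type := Fin 3 → ZMod N

/-- The standard unit vector `e_μ` in the torus. -/
def unitVec (N : ℕ) (μ : Fin 3) : TPt N := fun i => if i = μ then 1 else 0

/-- The representative of `a ∈ ℤ/Nℤ` in the symmetric range `{-(N-1)/2, …, (N-1)/2}`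
(for odd `N`). -/
def symRep (N : ℕ) (a : ZMod N) : ℤ :=
  if 2 * (a.val : ℤ) + 1 ≤ (N : ℤ) then (a.val : ℤ) else (a.val : ℤ) - (N : ℤ)

/-- Shift a torus point by `k` steps in direction `μ`. -/
def shiftT {N : ℕ} (z : TPt N) (μ : Fin 3) (k : ℤ) : TPt N :=
  fun i => if i = μ then z i + (k : ZMod N) else z i

/-- The sum of the gauge field `A` along the straight lattice path from `z` to `z + t·e_μ`. -/
def segT {N : ℕ} (A : TPt N → TPt N → ℝ) (z : TPt N) (μ : Fin 3) (t : ℤ) : ℝ :=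
  if 0 ≤ t then ∑ j ∈ Finset.range t.toNat, A (shiftT z μ (j : ℤ)) (shiftT z μ ((j : ℤ) + 1))
  else ∑ j ∈ Finset.range (-t).toNat, A (shiftT z μ (-(j : ℤ))) (shiftT z μ (-(j : ℤ) - 1))

/-- The field strength `dA` on the plaquette based at `x` spanned by `e_μ, e_ν`. -/
def plaqT {N : ℕ} (A : TPt N → TPt N → ℝ) (x : TPt N) (μ ν : Fin 3) : ℝ :=
  A x (x + unitVec N μ) + A (x + unitVec N μ) (x + unitVec N μ + unitVec N ν)
    + A (x + unitVec N μ + unitVec N ν) (x + unitVec N ν) + A (x + unitVec N ν) x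

/-- The corner of the rectilinear path `Γ^π_{yx}` reached after the first `m` coordinate
moves. -/
def interPtT {N : ℕ} (y x : TPt N) (π : Equiv.Perm (Fin 3)) (m : ℕ) : TPt N :=
  fun i => if ((π.symm i : Fin 3) : ℕ) < m then x i else y i

/-- `A(Γ^π_{yx})`: the sum of `A` along the rectilinear path (not wrapping around the
torus) from `y` to `x`, moving the coordinates to their final values in the order
`π 0, π 1, π 2`; the coordinate increments are the symmetric representatives of `x - y`. -/
def gammaSumT {N : ℕ} (A : TPt N → TPt N → ℝ) (π : Equiv.Perm (Fin 3)) (y x : TPt N) : ℝ :=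
  ∑ m : Fin 3, segT A (interPtT y x π (m : ℕ)) (π m) (symRep N (x (π m) - y (π m)))

/-- `(τA)(y,x) = (1/6) Σ_π A(Γ^π_{yx})`, averaged over the `3! = 6` permutations. -/
def tauBlk {N : ℕ} (A : TPt N → TPt N → ℝ) (y x : TPt N) : ℝ :=
  (1 / 6) * ∑ π : Equiv.Perm (Fin 3), gammaSumT A π y x

/-- The block of radius `R` centered at `y`: all `x` whose coordinates relative to `y`
have symmetric representative of absolute value at most `R`. -/
def blockF (N : ℕ) [NeZero N] (R : ℤ) (y : TPt N) : Finset (TPt N) :=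
  Finset.univ.filter fun x => ∀ i, |symRep N (x i - y i)| ≤ R

/-- Membership in the coarse lattice `(Lℤ/Nℤ)³ ⊆ (ℤ/Nℤ)³`. -/
def isCoarse (L N : ℕ) (y : TPt N) : Prop :=
  ∀ i, ∃ c : ZMod N, y i = (L : ZMod N) * c

/-- The coarse unit vector `L·e_μ`. -/
def cUnitVec (L N : ℕ) (μ : Fin 3) : TPt N := fun i => if i = μ then (L : ZMod N) else 0

/-- The block-averaged field on coarse bonds:
`(QA)(y, y+Le_μ) = L⁻⁴ Σ_{x ∈ B(y)} A(Γ_{x,x+Le_μ})`. -/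
def Qc (L : ℕ) {N : ℕ} [NeZero N] (A : TPt N → TPt N → ℝ) (y : TPt N) (μ : Fin 3) : ℝ :=
  ((L : ℝ) ^ 4)⁻¹ * ∑ x ∈ blockF N (((L : ℤ) - 1) / 2) y, segT A x μ (L : ℤ)

/-!
Flatness (`dZ = 0`) lets a lattice path be pushed across plaquettes without changing the
sum of `Z` along it, so the six paths `Γ^π_{yx}` all carry the same sum and `τZ(y, ·)` is a
discrete potential for `Z` inside `B(y)`: `τZ(y, x + e_μ) - τZ(y, x) = Z(x, x + e_μ)`.
Hence `τZ = 0` kills every bond inside a block. A bond leaving `B(y)` through its face in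
direction `μ` is compared with its neighbours on that face by a plaquette whose transverse
sides lie inside `B(y)` and `B(y + L e_μ)`, so all `L²` bonds crossing the face carry one
value `c`. Each straight path `Γ_{x, x + L e_μ}` with `x ∈ B(y)` consists of interior bonds
and exactly one crossing bond, so `(QZ)(y, y + L e_μ) = L⁻⁴ · L³ · c`, and `QZ = 0` forces
`c = 0`.
-/

section Shift

variable {N : ℕ}

@[simp]
lemma shiftT_apply_self (z : TPt N) (μ : Fin 3) (k : ℤ) : shiftT z μ k μ = z μ + k := by
  simp [shiftT]

@[simp]
lemma shiftT_apply_of_ne {z : TPt N} {μ i : Fin 3} (h : i ≠ μ) (k : ℤ) :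
    shiftT z μ k i = z i := by
  simp [shiftT, h]

lemma shiftT_zero (z : TPt N) (μ : Fin 3) : shiftT z μ 0 = z := by
  funext i; simp [shiftT]

lemma shiftT_shiftT (z : TPt N) (μ : Fin 3) (s t : ℤ) :
    shiftT (shiftT z μ s) μ t = shiftT z μ (s + t) := by
  funext i; by_cases h : i = μ <;> simp [shiftT, h, add_assoc]

lemma shiftT_comm (z : TPt N) (μ ν : Fin 3) (s t : ℤ) :
    shiftT (shiftT z μ s) ν t = shiftT (shiftT z ν t) μ s := by
  funext i; simp only [shiftT]; split_ifs <;> simp_all [add_right_comm]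

lemma shiftT_one (z : TPt N) (μ : Fin 3) : shiftT z μ 1 = z + unitVec N μ := by
  funext i; by_cases h : i = μ <;> simp [shiftT, unitVec, h]

lemma shiftT_add_one (z : TPt N) (μ : Fin 3) (t : ℤ) :
    shiftT z μ (t + 1) = shiftT z μ t + unitVec N μ := by
  rw [← shiftT_shiftT, shiftT_one]

end Shift

lemma cocycle_eq_zero {X G : Type*} [AddGroup G] (T : ℤ → X → X) (φ : X → ℤ → G)
    (hadd : ∀ z a b, φ z (a + b) = φ z a + φ (T a z) b) (hone : ∀ z, φ z 1 = 0)
    (z : X) (t : ℤ) : φ z t = 0 := by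
  have hzero : ∀ z, φ z 0 = 0 := fun z => by simpa [hone] using (hadd z 0 1).symm
  induction t using Int.induction_on generalizing z with
  | zero => exact hzero z
  | succ k ih => rw [hadd, ih, hone, add_zero]
  | pred k ih =>
    have h := hadd z (-k - 1) 1
    rwa [sub_add_cancel, ih, hone, add_zero, eq_comm] at h

section Segment

variable {N : ℕ} {A : TPt N → TPt N → ℝ}

def IsSkew (A : TPt N → TPt N → ℝ) : Prop := ∀ x x', A x x' = -A x' x

@[simp]
lemma segT_zero (A : TPt N → TPt N → ℝ) (z : TPt N) (μ : Fin 3) : segT A z μ 0 = 0 := by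
  simp [segT]

lemma segT_one (A : TPt N → TPt N → ℝ) (z : TPt N) (μ : Fin 3) :
    segT A z μ 1 = A z (z + unitVec N μ) := by
  simp [segT, shiftT_zero, shiftT_one]

lemma segT_of_nonpos (z : TPt N) (μ : Fin 3) {t : ℤ} (ht : t ≤ 0) :
    segT A z μ t = ∑ j ∈ range (-t).toNat, A (shiftT z μ (-j)) (shiftT z μ (-j - 1)) := by
  rcases ht.lt_or_eq with ht | rfl
  · simp [segT, not_le.mpr ht]
  · simp

lemma segT_add_one (hA : IsSkew A) (z : TPt N) (μ : Fin 3) (t : ℤ) :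
    segT A z μ (t + 1) = segT A z μ t + A (shiftT z μ t) (shiftT z μ (t + 1)) := by
  rcases le_or_gt 0 t with ht | ht
  · simp only [segT, if_pos ht, if_pos (by omega : (0 : ℤ) ≤ t + 1),
      show (t + 1).toNat = t.toNat + 1 by omega, sum_range_succ, Int.toNat_of_nonneg ht]
  · rw [segT_of_nonpos z μ (by omega : t + 1 ≤ 0), segT_of_nonpos z μ ht.le,
      show (-t).toNat = (-(t + 1)).toNat + 1 by omega, sum_range_succ,
      show -(((-(t + 1)).toNat : ℕ) : ℤ) = t + 1 by omega, add_sub_cancel_right,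
      hA (shiftT z μ (t + 1))]
    ring

lemma segT_add (hA : IsSkew A) (z : TPt N) (μ : Fin 3) (s t : ℤ) :
    segT A z μ (s + t) = segT A z μ s + segT A (shiftT z μ s) μ t := by
  induction t using Int.induction_on with
  | zero => simp
  | succ k ih =>
    rw [← add_assoc, segT_add_one hA, ih, segT_add_one hA, shiftT_shiftT, shiftT_shiftT,
      add_assoc, add_assoc]
  | pred k ih =>
    have h₁ := segT_add_one hA z μ (s + (-k - 1))
    have h₂ := segT_add_one hA (shiftT z μ s) μ (-k - 1)
    rw [shiftT_shiftT, shiftT_shiftT, show -(k : ℤ) - 1 + 1 = -k by ring] at h₂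
    rw [show s + (-(k : ℤ) - 1) + 1 = s + -k by ring, ih] at h₁
    linarith

end Segment

section Rectangle

variable {N : ℕ} {A : TPt N → TPt N → ℝ}

def IsFlat (A : TPt N → TPt N → ℝ) : Prop := ∀ x μ ν, μ ≠ ν → plaqT A x μ ν = 0

def rectDefect (A : TPt N → TPt N → ℝ) (z : TPt N) (μ ν : Fin 3) (s t : ℤ) : ℝ :=
  segT A z μ s + segT A (shiftT z μ s) ν t - (segT A z ν t + segT A (shiftT z ν t) μ s)

lemma rectDefect_swap (z : TPt N) (μ ν : Fin 3) (s t : ℤ) :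
    rectDefect A z μ ν s t = -rectDefect A z ν μ t s := by
  unfold rectDefect; ring

lemma rectDefect_add_right (hA : IsSkew A) (z : TPt N) (μ ν : Fin 3) (s t₁ t₂ : ℤ) :
    rectDefect A z μ ν s (t₁ + t₂) =
      rectDefect A z μ ν s t₁ + rectDefect A (shiftT z ν t₁) μ ν s t₂ := by
  unfold rectDefect
  rw [segT_add hA, segT_add hA, shiftT_shiftT, shiftT_comm z μ ν s t₁]
  ring

lemma rectDefect_one_one (hA : IsSkew A) (hF : IsFlat A) {μ ν : Fin 3} (hμν : μ ≠ ν)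
    (z : TPt N) : rectDefect A z μ ν 1 1 = 0 := by
  have h := hF z μ ν hμν
  rw [plaqT, hA (z + unitVec N μ + unitVec N ν), hA (z + unitVec N ν) z] at h
  simp only [rectDefect, segT_one, shiftT_one]
  rw [add_right_comm z (unitVec N ν)]
  linarith

lemma rectDefect_eq_zero (hA : IsSkew A) (hF : IsFlat A) {μ ν : Fin 3} (hμν : μ ≠ ν)
    (z : TPt N) (s t : ℤ) : rectDefect A z μ ν s t = 0 := by
  have h₁ : ∀ z t, rectDefect A z μ ν 1 t = 0 :=
    cocycle_eq_zero (fun a z => shiftT z ν a) _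
      (fun z a b => rectDefect_add_right hA z μ ν 1 a b) (rectDefect_one_one hA hF hμν)
  rw [rectDefect_swap, neg_eq_zero]
  exact cocycle_eq_zero (fun a z => shiftT z μ a) (fun z s => rectDefect A z ν μ t s)
    (fun z a b => rectDefect_add_right hA z ν μ t a b)
    (fun z => by rw [rectDefect_swap, h₁, neg_zero]) z s

lemma segT_add_segT_comm (hA : IsSkew A) (hF : IsFlat A) {μ ν : Fin 3} (hμν : μ ≠ ν)
    (z : TPt N) (s t : ℤ) :
    segT A z μ s + segT A (shiftT z μ s) ν t = segT A z ν t + segT A (shiftT z ν t) μ s :=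
  sub_eq_zero.mp (rectDefect_eq_zero hA hF hμν z s t)

end Rectangle

section SymRep

variable {N : ℕ} [NeZero N]

@[simp]
lemma symRep_cast (a : ZMod N) : ((symRep N a : ℤ) : ZMod N) = a := by
  unfold symRep
  split_ifs <;> simp

lemma two_mul_abs_symRep_le (a : ZMod N) : 2 * |symRep N a| ≤ N := by
  have := ZMod.val_lt a
  have h : -(N : ℤ) ≤ 2 * symRep N a ∧ 2 * symRep N a ≤ N := by
    unfold symRep; split_ifs <;> omega
  simpa [abs_mul] using abs_le.mpr h

lemma symRep_intCast {s : ℤ} (hs : 2 * |s| < N) : symRep N (s : ZMod N) = s := by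
  rw [← sub_eq_zero]
  apply Int.eq_zero_of_abs_lt_dvd (m := N)
  · exact (ZMod.intCast_zmod_eq_zero_iff_dvd _ N).mp (by simp)
  · have := two_mul_abs_symRep_le (s : ZMod N)
    have := abs_sub (symRep N (s : ZMod N)) s
    linarith

lemma symRep_add_intCast (a : ZMod N) (t : ℤ) (h : 2 * |symRep N a + t| < N) :
    symRep N (a + t) = symRep N a + t := by
  conv_lhs => rw [← symRep_cast a]
  exact_mod_cast symRep_intCast h

lemma symRep_shiftT_sub_shiftT (z c : TPt N) (μ : Fin 3) (t d : ℤ)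
    (h : 2 * |symRep N (z μ - c μ) + (t - d)| < N) :
    symRep N (shiftT z μ t μ - shiftT c μ d μ) = symRep N (z μ - c μ) + (t - d) := by
  rw [shiftT_apply_self, shiftT_apply_self,
    show z μ + t - (c μ + d) = z μ - c μ + ((t - d : ℤ) : ZMod N) by push_cast; ring]
  exact symRep_add_intCast _ _ h

lemma symRep_shiftT_sub (z c : TPt N) (μ : Fin 3) (t : ℤ)
    (h : 2 * |symRep N (z μ - c μ) + t| < N) :
    symRep N (shiftT z μ t μ - c μ) = symRep N (z μ - c μ) + t := by
  simpa [shiftT_zero] using symRep_shiftT_sub_shiftT z c μ t 0 (by simpa using h)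

lemma mem_blockF {R : ℤ} {c x : TPt N} :
    x ∈ blockF N R c ↔ ∀ i, |symRep N (x i - c i)| ≤ R := by
  simp [blockF]

lemma shiftT_mem_blockF_shiftT {R : ℤ} (hRN : 2 * R < N) {c z : TPt N}
    (hz : z ∈ blockF N R c) {μ : Fin 3} {t d : ℤ}
    (h : |symRep N (z μ - c μ) + (t - d)| ≤ R) :
    shiftT z μ t ∈ blockF N R (shiftT c μ d) := by
  rw [mem_blockF] at hz ⊢
  intro i
  by_cases hi : i = μ
  · subst hi
    rw [symRep_shiftT_sub_shiftT z c i t d (by linarith)]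
    exact h
  · simpa [shiftT_apply_of_ne hi] using hz i

lemma shiftT_mem_blockF {R : ℤ} (hRN : 2 * R < N) {c z : TPt N}
    (hz : z ∈ blockF N R c) {μ : Fin 3} {t : ℤ} (h : |symRep N (z μ - c μ) + t| ≤ R) :
    shiftT z μ t ∈ blockF N R c := by
  simpa [shiftT_zero] using shiftT_mem_blockF_shiftT hRN hz (d := 0) (by simpa using h)

end SymRep

lemma fin3_eq_or_eq_or_eq :
    ∀ {a b c : Fin 3}, a ≠ b → a ≠ c → b ≠ c → ∀ i, i = a ∨ i = b ∨ i = c := by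
  decide

lemma fin3_exists_pair_ne (μ : Fin 3) : ∃ a b : Fin 3, a ≠ b ∧ a ≠ μ ∧ b ≠ μ := by
  revert μ; decide

lemma fin3_eq_of_swap_invariant {β : Type*} (P : Fin 3 → Fin 3 → Fin 3 → β)
    (h₁₂ : ∀ {a b} c, a ≠ b → P a b c = P b a c)
    (h₂₃ : ∀ a {b c}, b ≠ c → P a b c = P a c b) :
    ∀ a b c, a ≠ b → a ≠ c → b ≠ c → P a b c = P 0 1 2 := by
  have e021 : P 0 2 1 = P 0 1 2 := h₂₃ 0 (by decide)
  have e102 : P 1 0 2 = P 0 1 2 := h₁₂ 2 (by decide)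
  have e120 : P 1 2 0 = P 0 1 2 := (h₂₃ 1 (by decide)).trans e102
  have e201 : P 2 0 1 = P 0 1 2 := (h₁₂ 1 (by decide)).trans e021
  have e210 : P 2 1 0 = P 0 1 2 := (h₂₃ 2 (by decide)).trans e201
  intro a b c hab hac hbc
  fin_cases a <;> fin_cases b <;> fin_cases c <;> first | rfl | assumption | simp at hab hac hbc

section Tau

variable {N : ℕ} {A : TPt N → TPt N → ℝ}

def rectilinearSum (A : TPt N → TPt N → ℝ) (y : TPt N) (v : Fin 3 → ℤ) (a b c : Fin 3) :
    ℝ :=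
  segT A y a (v a) + segT A (shiftT y a (v a)) b (v b)
    + segT A (shiftT (shiftT y a (v a)) b (v b)) c (v c)

lemma rectilinearSum_swap_left (hA : IsSkew A) (hF : IsFlat A) (y : TPt N) (v : Fin 3 → ℤ)
    {a b : Fin 3} (c : Fin 3) (hab : a ≠ b) :
    rectilinearSum A y v a b c = rectilinearSum A y v b a c := by
  have := segT_add_segT_comm hA hF hab y (v a) (v b)
  rw [rectilinearSum, rectilinearSum, shiftT_comm y a b]
  linarith

lemma rectilinearSum_swap_right (hA : IsSkew A) (hF : IsFlat A) (y : TPt N) (v : Fin 3 → ℤ)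
    (a : Fin 3) {b c : Fin 3} (hbc : b ≠ c) :
    rectilinearSum A y v a b c = rectilinearSum A y v a c b := by
  have := segT_add_segT_comm hA hF hbc (shiftT y a (v a)) (v b) (v c)
  rw [rectilinearSum, rectilinearSum]
  linarith

lemma interPtT_zero (y x : TPt N) (π : Equiv.Perm (Fin 3)) : interPtT y x π 0 = y := by
  funext i; simp [interPtT]

lemma interPtT_succ [NeZero N] (y x : TPt N) (π : Equiv.Perm (Fin 3)) (m : Fin 3) :
    interPtT y x π (m + 1) =
      shiftT (interPtT y x π m) (π m) (symRep N (x (π m) - y (π m))) := by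
  funext i
  by_cases h : i = π m
  · subst h
    simp [interPtT]
  · have hm : ((π.symm i : Fin 3) : ℕ) ≠ m := fun e => h (by rw [← Fin.ext e]; simp)
    simp only [interPtT, shiftT_apply_of_ne h]
    split_ifs <;> first | rfl | omega

lemma gammaSumT_eq_rectilinearSum [NeZero N] (π : Equiv.Perm (Fin 3)) (y x : TPt N) :
    gammaSumT A π y x =
      rectilinearSum A y (fun i => symRep N (x i - y i)) (π 0) (π 1) (π 2) := by
  have h₁ : interPtT y x π 1 = shiftT y (π 0) (symRep N (x (π 0) - y (π 0))) := by
    simpa [interPtT_zero] using interPtT_succ y x π 0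
  have h₂ : interPtT y x π 2 =
      shiftT (interPtT y x π 1) (π 1) (symRep N (x (π 1) - y (π 1))) :=
    interPtT_succ y x π 1
  simp only [gammaSumT, Fin.sum_univ_three, Fin.val_zero, Fin.val_one, Fin.val_two,
    interPtT_zero, h₂, h₁, rectilinearSum]

lemma tauBlk_eq_rectilinearSum [NeZero N] (hA : IsSkew A) (hF : IsFlat A) (y x : TPt N)
    {a b c : Fin 3} (hab : a ≠ b) (hac : a ≠ c) (hbc : b ≠ c) :
    tauBlk A y x = rectilinearSum A y (fun i => symRep N (x i - y i)) a b c := by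
  have hP := fin3_eq_of_swap_invariant (rectilinearSum A y fun i => symRep N (x i - y i))
    (fun c hab => rectilinearSum_swap_left hA hF y _ c hab)
    (fun a _ _ hbc => rectilinearSum_swap_right hA hF y _ a hbc)
  have hπ : ∀ π : Equiv.Perm (Fin 3), gammaSumT A π y x =
      rectilinearSum A y (fun i => symRep N (x i - y i)) a b c :=
    fun π => (gammaSumT_eq_rectilinearSum π y x).trans <|
      (hP _ _ _ (π.injective.ne (by decide)) (π.injective.ne (by decide))
        (π.injective.ne (by decide))).trans (hP _ _ _ hab hac hbc).symm
  rw [tauBlk, Finset.sum_congr rfl fun π _ => hπ π, Finset.sum_const, Finset.card_univ,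
    Fintype.card_perm, Fintype.card_fin]
  simp only [Nat.factorial, nsmul_eq_mul]
  ring

lemma shiftT_shiftT_shiftT_symRep [NeZero N] (y x : TPt N) {a b c : Fin 3}
    (hab : a ≠ b) (hac : a ≠ c) (hbc : b ≠ c) :
    shiftT (shiftT (shiftT y a (symRep N (x a - y a))) b (symRep N (x b - y b))) c
      (symRep N (x c - y c)) = x := by
  funext i
  rcases fin3_eq_or_eq_or_eq hab hac hbc i with rfl | rfl | rfl <;>
    simp [shiftT_apply_of_ne, hab, hac, hbc, hab.symm, hac.symm, hbc.symm]

lemma tauBlk_add_unitVec [NeZero N] (hA : IsSkew A) (hF : IsFlat A) (y x : TPt N) (μ : Fin 3)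
    (h : 2 * |symRep N (x μ - y μ) + 1| < N) :
    tauBlk A y (x + unitVec N μ) = tauBlk A y x + A x (x + unitVec N μ) := by
  obtain ⟨a, b, hab, haμ, hbμ⟩ := fin3_exists_pair_ne μ
  rw [tauBlk_eq_rectilinearSum hA hF y _ hab haμ hbμ,
    tauBlk_eq_rectilinearSum hA hF y _ hab haμ hbμ, ← shiftT_one]
  simp only [rectilinearSum, shiftT_apply_of_ne haμ, shiftT_apply_of_ne hbμ,
    symRep_shiftT_sub x y μ 1 h, segT_add_one hA]
  rw [← shiftT_shiftT _ μ _ 1, shiftT_shiftT_shiftT_symRep y x hab haμ hbμ]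
  ring

end Tau

lemma isCoarse_shiftT {L N : ℕ} {y : TPt N} (hy : isCoarse L N y) (μ : Fin 3) :
    isCoarse L N (shiftT y μ L) := by
  intro i
  obtain ⟨k, hk⟩ := hy i
  by_cases hi : i = μ
  · subst hi
    exact ⟨k + 1, by simp [hk, mul_add]⟩
  · exact ⟨k, by simp [shiftT_apply_of_ne hi, hk]⟩

section Blocks

variable {N : ℕ} [NeZero N] {A : TPt N → TPt N → ℝ} {L : ℕ} {R : ℤ}

/-- The bound on `symRep` says that `w + e_μ` lies in `B(c)` without wrapping around the
torus. -/
def InteriorBondsVanish (L : ℕ) (R : ℤ) (A : TPt N → TPt N → ℝ) : Prop :=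
  ∀ c, isCoarse L N c → ∀ w ∈ blockF N R c, ∀ μ, |symRep N (w μ - c μ) + 1| ≤ R →
    A w (w + unitVec N μ) = 0

lemma interiorBondsVanish_of_tauBlk (hA : IsSkew A) (hF : IsFlat A) (hRN : 2 * R < N)
    (htau : ∀ c, isCoarse L N c → ∀ x ∈ blockF N R c, tauBlk A c x = 0) :
    InteriorBondsVanish L R A := by
  intro c hc w hw μ h
  have hw' : w + unitVec N μ ∈ blockF N R c := by
    rw [← shiftT_one]
    exact shiftT_mem_blockF hRN hw h
  have := tauBlk_add_unitVec hA hF c w μ (by linarith)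
  rw [htau c hc w hw, htau c hc _ hw'] at this
  linarith

lemma segT_eq_zero_of_interior (hA : IsSkew A) (hRN : 2 * R < N)
    (hint : InteriorBondsVanish L R A) {c z : TPt N} (hc : isCoarse L N c)
    (hz : z ∈ blockF N R c) (μ : Fin 3) {t : ℤ} (ht : |symRep N (z μ - c μ) + t| ≤ R) :
    segT A z μ t = 0 := by
  have hnat : ∀ {z : TPt N}, z ∈ blockF N R c → ∀ n : ℕ,
      |symRep N (z μ - c μ) + n| ≤ R → segT A z μ n = 0 := by
    intro z hz n
    induction n with
    | zero => simp
    | succ n ih =>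
      intro hn
      have hs := mem_blockF.mp hz μ
      push_cast at hn ⊢
      have hn' : |symRep N (z μ - c μ) + n| ≤ R := by
        rw [abs_le] at hs hn ⊢; constructor <;> linarith
      rw [segT_add_one hA, ih hn', shiftT_add_one, zero_add]
      refine hint c hc _ (shiftT_mem_blockF hRN hz hn') μ ?_
      rwa [symRep_shiftT_sub z c μ n (by linarith), add_assoc]
  obtain ⟨n, rfl | rfl⟩ := Int.eq_nat_or_neg t
  · exact hnat hz n ht
  · have hsum := segT_add hA z μ (-n) n
    rw [neg_add_cancel, segT_zero, hnat (shiftT_mem_blockF hRN hz ht) n] at hsum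
    · linarith
    · rw [symRep_shiftT_sub z c μ _ (by linarith), neg_add_cancel_right]
      exact mem_blockF.mp hz μ

lemma segT_eq_faceBond (hA : IsSkew A) (hRN : 2 * R < N) (hint : InteriorBondsVanish L R A)
    (hL : (L : ℤ) = 2 * R + 1) {y x : TPt N} (hy : isCoarse L N y) (hx : x ∈ blockF N R y)
    (μ : Fin 3) :
    segT A x μ L = A (shiftT x μ (R - symRep N (x μ - y μ)))
      (shiftT x μ (R - symRep N (x μ - y μ)) + unitVec N μ) := by
  obtain ⟨s, hs⟩ : ∃ s, symRep N (x μ - y μ) = s := ⟨_, rfl⟩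
  have hsR := abs_le.mp (hs ▸ mem_blockF.mp hx μ)
  have hfar : |symRep N (x μ - y μ) + (R - s + 1 - L)| ≤ R := by
    rw [hs, abs_le]; constructor <;> linarith
  have hfar_off : symRep N (shiftT x μ (R - s + 1) μ - shiftT y μ L μ) = -R := by
    rw [symRep_shiftT_sub_shiftT x y μ _ _ (by linarith), hs]; omega
  rw [hs, show (L : ℤ) = R - s + (1 + (R + s)) by omega, segT_add hA, segT_add hA, segT_one,
    shiftT_shiftT, segT_eq_zero_of_interior hA hRN hint hy hx μ (by simp [hs, abs_le]; linarith),
    segT_eq_zero_of_interior hA hRN hint (isCoarse_shiftT hy μ)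
      (shiftT_mem_blockF_shiftT hRN hx hfar) μ
      (by rw [hfar_off, abs_le]; constructor <;> linarith)]
  ring

lemma faceBond_eq_of_shiftT (hA : IsSkew A) (hF : IsFlat A) (hRN : 2 * R < N)
    (hint : InteriorBondsVanish L R A) (hL : (L : ℤ) = 2 * R + 1) {y p : TPt N}
    (hy : isCoarse L N y) (hp : p ∈ blockF N R y) {μ ν : Fin 3}
    (hpμ : symRep N (p μ - y μ) = R) (hνμ : ν ≠ μ) {t : ℤ}
    (ht : |symRep N (p ν - y ν) + t| ≤ R) :
    A p (p + unitVec N μ) = A (shiftT p ν t) (shiftT p ν t + unitVec N μ) := by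
  have hR : 0 ≤ R := (abs_nonneg _).trans (mem_blockF.mp hp μ)
  have hfar : shiftT p μ 1 ∈ blockF N R (shiftT y μ L) :=
    shiftT_mem_blockF_shiftT hRN hp (by rw [hpμ, hL, abs_le]; constructor <;> linarith)
  have h := segT_add_segT_comm hA hF hνμ.symm p 1 t
  rw [segT_one, segT_one, segT_eq_zero_of_interior hA hRN hint hy hp ν ht,
    segT_eq_zero_of_interior hA hRN hint (isCoarse_shiftT hy μ) hfar ν
      (by simpa [shiftT_apply_of_ne hνμ] using ht)] at h
  linarith

lemma faceBond_eq (hA : IsSkew A) (hF : IsFlat A) (hRN : 2 * R < N)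
    (hint : InteriorBondsVanish L R A) (hL : (L : ℤ) = 2 * R + 1) {y p q : TPt N}
    (hy : isCoarse L N y) (hp : p ∈ blockF N R y) (hq : q ∈ blockF N R y) {μ : Fin 3}
    (hpμ : symRep N (p μ - y μ) = R) (hqμ : symRep N (q μ - y μ) = R) :
    A p (p + unitVec N μ) = A q (q + unitVec N μ) := by
  obtain ⟨a, b, hab, haμ, hbμ⟩ := fin3_exists_pair_ne μ
  have hq' := mem_blockF.mp hq
  set p₁ := shiftT p a (symRep N (q a - y a) - symRep N (p a - y a))
  have e₁ := faceBond_eq_of_shiftT hA hF hRN hint hL hy hp hpμ haμ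
    (t := symRep N (q a - y a) - symRep N (p a - y a)) (by simpa using hq' a)
  have hp₁ : p₁ ∈ blockF N R y := shiftT_mem_blockF hRN hp (by simpa using hq' a)
  have hp₁μ : symRep N (p₁ μ - y μ) = R := by
    simpa [p₁, shiftT_apply_of_ne haμ.symm] using hpμ
  have e₂ := faceBond_eq_of_shiftT hA hF hRN hint hL hy hp₁ hp₁μ hbμ
    (t := symRep N (q b - y b) - symRep N (p₁ b - y b)) (by simpa using hq' b)
  have hq_eq : shiftT p₁ b (symRep N (q b - y b) - symRep N (p₁ b - y b)) = q := by
    funext i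
    rcases fin3_eq_or_eq_or_eq hab haμ hbμ i with rfl | rfl | rfl
    · simp only [p₁, shiftT_apply_of_ne hab, shiftT_apply_self]
      push_cast
      linear_combination symRep_cast (q i - y i) - symRep_cast (p i - y i)
    · simp only [shiftT_apply_self]
      push_cast
      linear_combination symRep_cast (q i - y i) - symRep_cast (p₁ i - y i)
    · have hpR := symRep_cast (p i - y i)
      have hqR := symRep_cast (q i - y i)
      rw [hpμ] at hpR
      rw [hqμ] at hqR
      simp only [p₁, shiftT_apply_of_ne hbμ.symm, shiftT_apply_of_ne haμ.symm]
      linear_combination hqR - hpR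
  rw [e₁, e₂, hq_eq]

lemma faceBond_eq_zero (hA : IsSkew A) (hF : IsFlat A) (hRN : 2 * R < N)
    (hint : InteriorBondsVanish L R A) (hL : (L : ℤ) = 2 * R + 1) {y x : TPt N}
    (hy : isCoarse L N y) {μ : Fin 3} (hQ : Qc L A y μ = 0) (hx : x ∈ blockF N R y)
    (hxμ : symRep N (x μ - y μ) = R) : A x (x + unitVec N μ) = 0 := by
  have hterm : ∀ x' ∈ blockF N R y, segT A x' μ L = A x (x + unitVec N μ) := by
    intro x' hx'
    have hR : 0 ≤ R := (abs_nonneg _).trans (mem_blockF.mp hx' μ)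
    have hface : |symRep N (x' μ - y μ) + (R - symRep N (x' μ - y μ))| ≤ R := by
      rw [add_sub_cancel, abs_of_nonneg hR]
    rw [segT_eq_faceBond hA hRN hint hL hy hx' μ]
    refine faceBond_eq hA hF hRN hint hL hy (shiftT_mem_blockF hRN hx' hface) hx ?_ hxμ
    rw [symRep_shiftT_sub _ _ _ _ (by linarith), add_sub_cancel]
  rw [Qc, show ((L : ℤ) - 1) / 2 = R by omega, Finset.sum_congr rfl hterm, Finset.sum_const,
    nsmul_eq_mul] at hQ
  have hL0 : (L : ℝ) ≠ 0 := by
    have : (0 : ℤ) < L := by linarith [(abs_nonneg _).trans (mem_blockF.mp hx μ)]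
    exact_mod_cast this.ne'
  simpa [hL0, Finset.card_ne_zero_of_mem hx] using hQ

lemma exists_isCoarse_mem_blockF (hL : (L : ℤ) = 2 * R + 1) (hRN : 2 * R < N) (x : TPt N) :
    ∃ y, isCoarse L N y ∧ x ∈ blockF N R y := by
  have key : ∀ a : ZMod N, ∃ k s : ℤ, |s| ≤ R ∧ a = (L : ZMod N) * k + s := by
    intro a
    have hdiv := Int.mul_ediv_add_emod ((a.val : ℤ) + R) L
    have h₀ := Int.emod_nonneg ((a.val : ℤ) + R) (by omega : (L : ℤ) ≠ 0)
    have h₁ := Int.emod_lt_of_pos ((a.val : ℤ) + R) (by omega : (0 : ℤ) < L)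
    refine ⟨((a.val : ℤ) + R) / L, ((a.val : ℤ) + R) % L - R, by rw [abs_le]; omega, ?_⟩
    have := congrArg (Int.cast : ℤ → ZMod N) hdiv
    push_cast [ZMod.natCast_zmod_val] at this ⊢
    linear_combination -this
  choose k s hs hks using fun i => key (x i)
  refine ⟨fun i => (L : ZMod N) * k i, fun i => ⟨k i, rfl⟩, mem_blockF.mpr fun i => ?_⟩
  rw [show x i - L * k i = (s i : ZMod N) by rw [hks i]; ring,
    symRep_intCast (by linarith [hs i])]
  exact hs i

end Blocks

theorem block_gauge_rigidity_general (L M : ℕ) (hLodd : Odd L) (hM : 2 ≤ M)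
    [NeZero (L ^ M)]
    (Z : TPt (L ^ M) → TPt (L ^ M) → ℝ) (hZ : ∀ x x', Z x x' = - Z x' x)
    (hQ : ∀ y : TPt (L ^ M), isCoarse L (L ^ M) y → ∀ μ : Fin 3, Qc L Z y μ = 0)
    (htau : ∀ y : TPt (L ^ M), isCoarse L (L ^ M) y →
      ∀ x ∈ blockF (L ^ M) (((L : ℤ) - 1) / 2) y, tauBlk Z y x = 0)
    (hdZ : ∀ (x : TPt (L ^ M)) (μ ν : Fin 3), μ ≠ ν → plaqT Z x μ ν = 0) :
    ∀ (x : TPt (L ^ M)) (μ : Fin 3), Z x (x + unitVec (L ^ M) μ) = 0 := by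
  intro x μ
  set R : ℤ := ((L : ℤ) - 1) / 2
  have hL : (L : ℤ) = 2 * R + 1 := by obtain ⟨r, hr⟩ := hLodd; omega
  have hRN : 2 * R < ((L ^ M : ℕ) : ℤ) := by
    have : L ≤ L ^ M := Nat.le_self_pow (by omega) L
    omega
  have hint := interiorBondsVanish_of_tauBlk hZ hdZ hRN htau
  obtain ⟨y, hy, hx⟩ := exists_isCoarse_mem_blockF hL hRN x
  obtain ⟨hlo, hhi⟩ := abs_le.mp (mem_blockF.mp hx μ)
  rcases hhi.lt_or_eq with hlt | heq
  · exact hint y hy x hx μ (abs_le.mpr ⟨by omega, by omega⟩)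
  · exact faceBond_eq_zero hZ hdZ hRN hint hL hy (hQ y hy μ) hx heq

/-- If a gauge field `Z` on `T = (ℤ/L^Mℤ)³` satisfies `QZ = 0` on every
coarse bond, `(τZ)(y,x) = 0` for every coarse site `y` and every `x ∈ B(y)`, and
`dZ(p) = 0` for every plaquette, then `Z` vanishes on every bond. -/
theorem block_gauge_rigidity (L M : ℕ) (hL3 : 3 ≤ L) (hLodd : Odd L) (hM : 2 ≤ M)
    [NeZero (L ^ M)]
    (Z : TPt (L ^ M) → TPt (L ^ M) → ℝ) (hZ : ∀ x x', Z x x' = - Z x' x)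
    (hQ : ∀ y : TPt (L ^ M), isCoarse L (L ^ M) y → ∀ μ : Fin 3, Qc L Z y μ = 0)
    (htau : ∀ y : TPt (L ^ M), isCoarse L (L ^ M) y →
      ∀ x ∈ blockF (L ^ M) (((L : ℤ) - 1) / 2) y, tauBlk Z y x = 0)
    (hdZ : ∀ (x : TPt (L ^ M)) (μ ν : Fin 3), μ ≠ ν → plaqT Z x μ ν = 0) :
    ∀ (x : TPt (L ^ M)) (μ : Fin 3), Z x (x + unitVec (L ^ M) μ) = 0 :=
  block_gauge_rigidity_general L M hLodd hM Z hZ hQ htau hdZ
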